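/- Let (X,d) be a CAT(0) space, A ⊆ X nonempty and convex, and consider a play of the Lion-Man game in A with speed D > 0 in which the man wins (equivalently, D_n > D for all n ∈ ℕ and lim_{n→∞} D_n > D). Then the comparison angles ∠̄_{L_n}(M_{n−1},M_n) tend to 0 as n → ∞, and the Alexandrov angles β_n = ∠_{L_n}(L_{n−1},M_n) tend to π as n → ∞. -/

import Mathlib

/-!
The distances `dₙ = d(Lₙ₊₁, Mₙ)` are nonincreasing, and they stay positive because the man wins;
hence `Dₙ > D` for all `n`, the lion always runs the full distance `D`, and `dₙ ↓ c > 0`. In the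
triangle `Lₙ₊₁ Mₙ Mₙ₊₁` the sides at `Lₙ₊₁` tend to `c` and `c + D` while the opposite side is at
most `D`, which forces the angle at `Lₙ₊₁` to `0`.

Since `Lₙ₊₁` lies inside the geodesic `[Lₙ, Mₙ]`, the CAT(0) inequality, written as a bound
through Stewart's theorem and applied in two adjacent triangles, shows that for `p` on `[Lₙ₊₁, Lₙ]`
and `q` on `[Lₙ₊₁, Mₙ₊₁]` one has `∠̄(p, q) ≥ π - ∠̄_{Lₙ₊₁}(Mₙ, Mₙ₊₁)` at `Lₙ₊₁`. So
`π - ∠̄_{Lₙ₊₁}(Mₙ, Mₙ₊₁) ≤ βₙ ≤ π`, and `βₙ → π`.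
-/

open Set Filter Metric

section Defs

variable {X : Type*} [MetricSpace X]

/-- A unit-speed geodesic defined on `[a, b]`. -/
def IsGeodesicOn (γ : ℝ → X) (a b : ℝ) : Prop :=
  ∀ s ∈ Set.Icc a b, ∀ t ∈ Set.Icc a b, dist (γ s) (γ t) = |s - t|

/-- `S` is a geodesic segment joining `x` and `y`. -/
def IsGeodesicSegment (S : Set X) (x y : X) : Prop :=
  ∃ (a b : ℝ) (γ : ℝ → X), a ≤ b ∧ IsGeodesicOn γ a b ∧ γ a = x ∧ γ b = y ∧
    S = γ '' Set.Icc a b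

/-- A geodesic space: every two points are joined by a geodesic segment. -/
def GeodesicSpace (X : Type*) [MetricSpace X] : Prop :=
  ∀ x y : X, ∃ S : Set X, IsGeodesicSegment S x y

/-- A uniquely geodesic space. -/
def UniquelyGeodesic (X : Type*) [MetricSpace X] : Prop :=
  ∀ x y : X, ∃! S : Set X, IsGeodesicSegment S x y

/-- `S` is contained in the closed `M`-neighborhood of `T`. -/
def InClosedNbhd (S T : Set X) (M : ℝ) : Prop :=
  ∀ p ∈ S, ∃ q ∈ T, dist p q ≤ M

/-- A triangle with sides `S1, S2, S3` is `M`-slim. -/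
def SlimTriangle (S1 S2 S3 : Set X) (M : ℝ) : Prop :=
  InClosedNbhd S1 (S2 ∪ S3) M ∧ InClosedNbhd S2 (S1 ∪ S3) M ∧ InClosedNbhd S3 (S1 ∪ S2) M

/-- `X` is `δ`-hyperbolic: every geodesic triangle is `δ`-slim. -/
def DeltaHyperbolic (X : Type*) [MetricSpace X] (δ : ℝ) : Prop :=
  ∀ x y z : X, ∀ S1 S2 S3 : Set X,
    IsGeodesicSegment S1 x y → IsGeodesicSegment S2 y z → IsGeodesicSegment S3 z x →
    SlimTriangle S1 S2 S3 δ

/-- A geodesic ray `γ : [0, ∞) → X`. -/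
def IsGeodesicRay (γ : ℝ → X) : Prop :=
  ∀ s ∈ Set.Ici (0:ℝ), ∀ t ∈ Set.Ici (0:ℝ), dist (γ s) (γ t) = |s - t|

/-- A set is geodesically bounded if it contains no geodesic ray. -/
def GeodesicallyBounded (A : Set X) : Prop :=
  ¬ ∃ γ : ℝ → X, IsGeodesicRay γ ∧ ∀ t ∈ Set.Ici (0:ℝ), γ t ∈ A

/-- A directional curve `γ : [0, ∞) → X` (with some constant `b ≥ 0`). -/
def IsDirectionalCurve (γ : ℝ → X) : Prop :=
  ∃ b : ℝ, 0 ≤ b ∧ ∀ s ∈ Set.Ici (0:ℝ), ∀ t ∈ Set.Ici (0:ℝ),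
    |s - t| - b ≤ dist (γ s) (γ t) ∧ dist (γ s) (γ t) ≤ |s - t|

/-- A set is directionally bounded if it contains no directional curve. -/
def DirectionallyBounded (A : Set X) : Prop :=
  ¬ ∃ γ : ℝ → X, IsDirectionalCurve γ ∧ ∀ t ∈ Set.Ici (0:ℝ), γ t ∈ A

/-- A subset of a geodesic space is convex if every geodesic segment joining two of its
points is contained in it. -/
def GeodesicConvex (A : Set X) : Prop :=
  ∀ x ∈ A, ∀ y ∈ A, ∀ S : Set X, IsGeodesicSegment S x y → S ⊆ A

/-- The comparison point in the Euclidean plane: the point on the segment from `x'` to `y'`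
(of length `L`) at distance `t` from `x'`. -/
noncomputable def cmpPt (x' y' : EuclideanSpace ℝ (Fin 2)) (L t : ℝ) :
    EuclideanSpace ℝ (Fin 2) :=
  AffineMap.lineMap x' y' (t / L)

/-- `X` is a CAT(0) space: it is geodesic and for every geodesic triangle and every
comparison triangle in the Euclidean plane, distances between points on the triangle are
bounded by the distances between the corresponding comparison points. -/
def CAT0Space (X : Type*) [MetricSpace X] : Prop :=
  GeodesicSpace X ∧
  ∀ (x y z : X) (γ1 γ2 γ3 : ℝ → X),
    IsGeodesicOn γ1 0 (dist x y) → γ1 0 = x → γ1 (dist x y) = y →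
    IsGeodesicOn γ2 0 (dist y z) → γ2 0 = y → γ2 (dist y z) = z →
    IsGeodesicOn γ3 0 (dist z x) → γ3 0 = z → γ3 (dist z x) = x →
    ∀ x' y' z' : EuclideanSpace ℝ (Fin 2),
      dist x' y' = dist x y → dist y' z' = dist y z → dist z' x' = dist z x →
      (∀ s ∈ Set.Icc (0:ℝ) (dist x y), ∀ t ∈ Set.Icc (0:ℝ) (dist y z),
        dist (γ1 s) (γ2 t) ≤ dist (cmpPt x' y' (dist x y) s) (cmpPt y' z' (dist y z) t)) ∧
      (∀ s ∈ Set.Icc (0:ℝ) (dist y z), ∀ t ∈ Set.Icc (0:ℝ) (dist z x),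
        dist (γ2 s) (γ3 t) ≤ dist (cmpPt y' z' (dist y z) s) (cmpPt z' x' (dist z x) t)) ∧
      (∀ s ∈ Set.Icc (0:ℝ) (dist z x), ∀ t ∈ Set.Icc (0:ℝ) (dist x y),
        dist (γ3 s) (γ1 t) ≤ dist (cmpPt z' x' (dist z x) s) (cmpPt x' y' (dist x y) t))

/-- Busemann convexity. -/
def BusemannConvex (X : Type*) [MetricSpace X] : Prop :=
  GeodesicSpace X ∧
  ∀ (a b c d : ℝ) (γ σ : ℝ → X), a ≤ b → c ≤ d →
    IsGeodesicOn γ a b → IsGeodesicOn σ c d →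
    ∀ t ∈ Set.Icc (0:ℝ) 1,
      dist (γ ((1-t)*a + t*b)) (σ ((1-t)*c + t*d)) ≤
        (1-t) * dist (γ a) (σ c) + t * dist (γ b) (σ d)

/-- A `(lam, eps)`-quasi-geodesic defined on `[a, b]`. -/
def IsQuasiGeodesicOn (lam eps : ℝ) (γ : ℝ → X) (a b : ℝ) : Prop :=
  ∀ s ∈ Set.Icc a b, ∀ t ∈ Set.Icc a b,
    (1/lam) * |s - t| - eps ≤ dist (γ s) (γ t) ∧ dist (γ s) (γ t) ≤ lam * |s - t| + eps

/-- A `(lam, eps)`-quasi-geodesic ray. -/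
def IsQuasiGeodesicRay (lam eps : ℝ) (γ : ℝ → X) : Prop :=
  ∀ s ∈ Set.Ici (0:ℝ), ∀ t ∈ Set.Ici (0:ℝ),
    (1/lam) * |s - t| - eps ≤ dist (γ s) (γ t) ∧ dist (γ s) (γ t) ≤ lam * |s - t| + eps

/-- A `k`-local `lam`-quasi-geodesic ray: a `(lam, eps)`-quasi-geodesic ray locally,
for every `eps > 0`. -/
def IsLocalQuasiGeodesicRay (k lam : ℝ) (γ : ℝ → X) : Prop :=
  ∀ eps > (0:ℝ), ∀ s ∈ Set.Ici (0:ℝ), ∀ t ∈ Set.Ici (0:ℝ), |s - t| ≤ k →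
    (1/lam) * |s - t| - eps ≤ dist (γ s) (γ t) ∧ dist (γ s) (γ t) ≤ lam * |s - t| + eps

/-- `S` is the image of a `lam`-quasi-geodesic joining `x` and `y`
(i.e. a `(lam, eps)`-quasi-geodesic for every `eps > 0`). -/
def IsQuasiGeodesicSegment (lam : ℝ) (S : Set X) (x y : X) : Prop :=
  ∃ (a b : ℝ) (γ : ℝ → X), a ≤ b ∧ (∀ eps > (0:ℝ), IsQuasiGeodesicOn lam eps γ a b) ∧
    γ a = x ∧ γ b = y ∧ S = γ '' Set.Icc a b

/-- Every `lam`-quasi-geodesic triangle in `X` is `M`-slim. -/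
def QuasiGeodesicTrianglesSlim (X : Type*) [MetricSpace X] (lam M : ℝ) : Prop :=
  ∀ x y z : X, ∀ S1 S2 S3 : Set X,
    IsQuasiGeodesicSegment lam S1 x y → IsQuasiGeodesicSegment lam S2 y z →
    IsQuasiGeodesicSegment lam S3 z x → SlimTriangle S1 S2 S3 M

/-- A play of the Lion-Man game in `A` with speed `D`. -/
def IsLionManPlay (A : Set X) (D : ℝ) (L M : ℕ → X) : Prop :=
  (∀ n, L n ∈ A) ∧ (∀ n, M n ∈ A) ∧
  (∀ n, ∃ S : Set X, IsGeodesicSegment S (L n) (M n) ∧ L (n+1) ∈ S) ∧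
  (∀ n, dist (L n) (L (n+1)) = min D (dist (L n) (M n))) ∧
  (∀ n, dist (M n) (M (n+1)) ≤ D)

/-- The lion wins a play if `d(L_{n+1}, M_n) → 0`. -/
def LionWins (L M : ℕ → X) : Prop :=
  Filter.Tendsto (fun n => dist (L (n+1)) (M n)) Filter.atTop (nhds 0)

/-- The lion always wins the Lion-Man game played in `A`. -/
def LionAlwaysWins (A : Set X) : Prop :=
  ∀ D > (0:ℝ), ∀ L M : ℕ → X, IsLionManPlay A D L M → LionWins L M

end Defs

/-- The comparison angle `∠̄_x(y, z)`: the interior angle at the vertex corresponding to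
`x` in a Euclidean comparison triangle. -/
noncomputable def compAngle {X : Type*} [MetricSpace X] (x y z : X) : ℝ :=
  Real.arccos ((dist x y ^ 2 + dist x z ^ 2 - dist y z ^ 2) / (2 * dist x y * dist x z))

/-- The Alexandrov angle at `x` between two unit-speed geodesics `γ`, `σ` issuing from
`x`: the limsup of comparison angles `∠̄_x(γ(t), σ(s))` as `t, s → 0⁺`. -/
noncomputable def alexAngle {X : Type*} [MetricSpace X] (x : X) (γ σ : ℝ → X) : ℝ :=
  Filter.limsup (fun p : ℝ × ℝ => compAngle x (γ p.1) (σ p.2))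
    ((nhdsWithin 0 (Set.Ioi 0)) ×ˢ (nhdsWithin 0 (Set.Ioi 0)))

open Real Topology

theorem exists_triangle_euclideanSpace {a b c : ℝ} (ha : 0 ≤ a) (hb : 0 ≤ b) (hc : 0 ≤ c)
    (hab : c ≤ a + b) (hbc : a ≤ b + c) (hca : b ≤ c + a) :
    ∃ x y z : EuclideanSpace ℝ (Fin 2), dist x y = c ∧ dist y z = a ∧ dist z x = b := by
  -- `p` is the abscissa of the foot of the altitude from `z`; for `c = 0` it is `x / 0 = 0`
  set p := (c ^ 2 + b ^ 2 - a ^ 2) / (2 * c)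
  have hp : 2 * c * p = c ^ 2 + b ^ 2 - a ^ 2 := by
    rcases hc.eq_or_lt with rfl | hc
    · have : a = b := by linarith
      simp [this]
    · simp only [p]; field_simp
  have hbp : p ^ 2 ≤ b ^ 2 := by
    rcases hc.eq_or_lt with rfl | hc
    · simp [p, sq_nonneg]
    · refine le_of_mul_le_mul_left ?_ (by positivity : 0 < (2 * c) ^ 2)
      nlinarith [mul_nonneg (mul_nonneg (by linarith : 0 ≤ b + c - a) (by linarith : 0 ≤ a + b + c))
        (mul_nonneg (by linarith : 0 ≤ a + c - b) (by linarith : 0 ≤ a + b - c))]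
  set h := √(b ^ 2 - p ^ 2)
  have hh : h ^ 2 = b ^ 2 - p ^ 2 := sq_sqrt (by linarith)
  refine ⟨!₂[0, 0], !₂[c, 0], !₂[p, h], ?_, ?_, ?_⟩ <;>
    simp only [EuclideanSpace.dist_eq, Fin.sum_univ_two, Real.dist_eq, sq_abs,
      Matrix.cons_val_zero, Matrix.cons_val_one]
  · simp [hc]
  · rw [show (c - p) ^ 2 + (0 - h) ^ 2 = a ^ 2 by nlinarith, sqrt_sq ha]
  · rw [show (p - 0) ^ 2 + (h - 0) ^ 2 = b ^ 2 by nlinarith, sqrt_sq hb]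

theorem mul_dist_cmpPt_sq {x y z : EuclideanSpace ℝ (Fin 2)} {e : ℝ} (hxy : dist x y = e)
    (he : e ≠ 0) (t : ℝ) :
    e * dist (cmpPt x y e t) z ^ 2 =
      e * (dist x z ^ 2 + t ^ 2) - t * (dist x z ^ 2 + e ^ 2 - dist y z ^ 2) := by
  have hcmp : cmpPt x y e t - z = (x - z) + (t / e) • (y - x) := by
    rw [cmpPt, AffineMap.lineMap_apply_module]; module
  have hyz : y - z = (x - z) + (y - x) := by abel
  have hyx : ‖y - x‖ = e := by rw [← dist_eq_norm, dist_comm, hxy]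
  rw [dist_eq_norm, dist_eq_norm, dist_eq_norm, hcmp, hyz, norm_add_sq_real, norm_add_sq_real,
    inner_smul_right, norm_smul, hyx, Real.norm_eq_abs, mul_pow, sq_abs]
  field_simp
  ring

section Geodesics

variable {X : Type*} [MetricSpace X] {γ : ℝ → X} {a b : ℝ}

theorem IsGeodesicOn.mono (h : IsGeodesicOn γ a b) {a' b' : ℝ} (ha : a ≤ a') (hb : b' ≤ b) :
    IsGeodesicOn γ a' b' := fun s hs t ht =>
  h s ⟨ha.trans hs.1, hs.2.trans hb⟩ t ⟨ha.trans ht.1, ht.2.trans hb⟩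

theorem IsGeodesicOn.comp_const_sub (h : IsGeodesicOn γ a b) (c : ℝ) :
    IsGeodesicOn (fun t => γ (c - t)) (c - b) (c - a) := by
  intro s hs t ht
  rw [h (c - s) ⟨by linarith [hs.2], by linarith [hs.1]⟩ (c - t)
    ⟨by linarith [ht.2], by linarith [ht.1]⟩, abs_sub_comm]
  ring_nf

theorem IsGeodesicOn.comp_const_add (h : IsGeodesicOn γ a b) (c : ℝ) :
    IsGeodesicOn (fun t => γ (c + t)) (a - c) (b - c) := by
  intro s hs t ht
  rw [h (c + s) ⟨by linarith [hs.1], by linarith [hs.2]⟩ (c + t)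
    ⟨by linarith [ht.1], by linarith [ht.2]⟩]
  ring_nf

theorem IsGeodesicOn.dist_left_apply (h : IsGeodesicOn γ 0 b) {t : ℝ} (ht : t ∈ Icc 0 b) :
    dist (γ 0) (γ t) = t := by
  rw [h 0 ⟨le_rfl, ht.1.trans ht.2⟩ t ht, zero_sub, abs_neg, abs_of_nonneg ht.1]

theorem IsGeodesicOn.dist_apply_right (h : IsGeodesicOn γ 0 b) {t : ℝ} (ht : t ∈ Icc 0 b) :
    dist (γ t) (γ b) = b - t := by
  rw [h t ht b ⟨ht.1.trans ht.2, le_rfl⟩, abs_sub_comm, abs_of_nonneg (by linarith [ht.2])]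

theorem IsGeodesicSegment.exists_geodesicOn_of_mem {S : Set X} {x y p : X}
    (hS : IsGeodesicSegment S x y) (hp : p ∈ S) :
    ∃ φ : ℝ → X, IsGeodesicOn φ 0 (dist x y) ∧ φ 0 = x ∧ φ (dist x y) = y ∧
      φ (dist x p) = p := by
  obtain ⟨a, b, γ, hab, hγ, rfl, rfl, rfl⟩ := hS
  obtain ⟨u, hu, rfl⟩ := hp
  have hφ := (hγ.comp_const_add a).mono (le_of_eq (sub_self a)) le_rfl
  have hdist : ∀ v ∈ Icc a b, dist (γ a) (γ v) = v - a := fun v hv => by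
    rw [hγ a ⟨le_rfl, hab⟩ v hv, abs_sub_comm, abs_of_nonneg (by linarith [hv.1])]
  rw [hdist b ⟨hab, le_rfl⟩, hdist u hu]
  exact ⟨_, hφ, by simp, by simp, by simp⟩

theorem IsGeodesicSegment.left_mem {S : Set X} {x y : X} (hS : IsGeodesicSegment S x y) :
    x ∈ S := by
  obtain ⟨a, b, γ, hab, -, rfl, -, rfl⟩ := hS
  exact ⟨a, ⟨le_rfl, hab⟩, rfl⟩

theorem GeodesicSpace.exists_geodesicOn (hX : GeodesicSpace X) (x y : X) :
    ∃ φ : ℝ → X, IsGeodesicOn φ 0 (dist x y) ∧ φ 0 = x ∧ φ (dist x y) = y := by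
  obtain ⟨S, hS⟩ := hX x y
  obtain ⟨φ, hφ, hφ0, hφ1, -⟩ := hS.exists_geodesicOn_of_mem hS.left_mem
  exact ⟨φ, hφ, hφ0, hφ1⟩

end Geodesics

namespace CAT0Space

variable {X : Type*} [MetricSpace X]

theorem exists_comparison_triangle (x y z : X) :
    ∃ x' y' z' : EuclideanSpace ℝ (Fin 2),
      dist x' y' = dist x y ∧ dist y' z' = dist y z ∧ dist z' x' = dist z x :=
  exists_triangle_euclideanSpace dist_nonneg dist_nonneg dist_nonneg
    (by linarith [dist_triangle x z y, dist_comm x z, dist_comm z y])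
    (by linarith [dist_triangle y x z, dist_comm x y, dist_comm x z])
    (by linarith [dist_triangle z y x, dist_comm z y, dist_comm y x])

/-- The CAT(0) inequality for a point `φ t` on the side `[x, y]` of the triangle `x y z`,
in the form of Stewart's theorem. -/
theorem mul_dist_sq_le (hX : CAT0Space X) {x y z : X} {φ : ℝ → X}
    (hφ : IsGeodesicOn φ 0 (dist x y)) (hφ0 : φ 0 = x) (hφ1 : φ (dist x y) = y)
    {t : ℝ} (ht : t ∈ Icc 0 (dist x y)) :
    dist x y * dist (φ t) z ^ 2 ≤
      dist x y * (dist x z ^ 2 + t ^ 2) - t * (dist x z ^ 2 + dist x y ^ 2 - dist y z ^ 2) := by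
  rcases (dist_nonneg (x := x) (y := y)).eq_or_lt with hxy | hxy
  · obtain rfl : t = 0 := le_antisymm (ht.2.trans_eq hxy.symm) ht.1
    simp [← hxy]
  obtain ⟨γ₂, hγ₂, hγ₂0, hγ₂1⟩ := hX.1.exists_geodesicOn y z
  obtain ⟨γ₃, hγ₃, hγ₃0, hγ₃1⟩ := hX.1.exists_geodesicOn z x
  obtain ⟨x', y', z', hx'y', hy'z', hz'x'⟩ := exists_comparison_triangle x y z
  have hcmp := (hX.2 x y z φ γ₂ γ₃ hφ hφ0 hφ1 hγ₂ hγ₂0 hγ₂1 hγ₃ hγ₃0 hγ₃1 x' y' z'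
    hx'y' hy'z' hz'x').2.2 0 ⟨le_rfl, dist_nonneg⟩ t ht
  rw [hγ₃0, cmpPt, zero_div, AffineMap.lineMap_apply_zero, dist_comm z, dist_comm z'] at hcmp
  have hsq := pow_le_pow_left₀ dist_nonneg hcmp 2
  have hstewart := mul_dist_cmpPt_sq hx'y' hxy.ne' t (z := z')
  rw [dist_comm x' z', hz'x', dist_comm z x, hy'z'] at hstewart
  rw [← hstewart]
  exact mul_le_mul_of_nonneg_left hsq hxy.le

theorem geodesicOn_eq (hX : CAT0Space X) {x y : X} {φ ψ : ℝ → X}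
    (hφ : IsGeodesicOn φ 0 (dist x y)) (hφ0 : φ 0 = x) (hφ1 : φ (dist x y) = y)
    (hψ : IsGeodesicOn ψ 0 (dist x y)) (hψ0 : ψ 0 = x) (hψ1 : ψ (dist x y) = y)
    {t : ℝ} (ht : t ∈ Icc 0 (dist x y)) : φ t = ψ t := by
  rcases (dist_nonneg (x := x) (y := y)).eq_or_lt with hxy | hxy
  · obtain rfl : t = 0 := le_antisymm (ht.2.trans_eq hxy.symm) ht.1
    rw [hφ0, hψ0]
  -- with the third vertex at `ψ t`, the right-hand side of the CAT(0) bound vanishes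
  have h := hX.mul_dist_sq_le hφ hφ0 hφ1 ht (z := ψ t)
  have hxψ : dist x (ψ t) = t := hψ0 ▸ hψ.dist_left_apply ht
  have hψy : dist (ψ t) y = dist x y - t := by simpa only [hψ1] using hψ.dist_apply_right ht
  rw [hxψ, dist_comm y, hψy] at h
  exact dist_eq_zero.mp ((sq_nonpos_iff _).mp (nonpos_of_mul_nonpos_right (by linarith) hxy))

end CAT0Space

section Angles

variable {X : Type*} [MetricSpace X]

noncomputable def compCos (x y z : X) : ℝ :=
  (dist x y ^ 2 + dist x z ^ 2 - dist y z ^ 2) / (2 * dist x y * dist x z)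

theorem compAngle_eq_arccos (x y z : X) : compAngle x y z = arccos (compCos x y z) := rfl

theorem compCos_le_one (x y z : X) : compCos x y z ≤ 1 := by
  refine div_le_one_of_le₀ ?_ (by positivity)
  have h := abs_dist_sub_le y z x
  rw [dist_comm y x, dist_comm z x] at h
  nlinarith [sq_le_sq' (abs_le.mp h).1 (abs_le.mp h).2]

theorem alexAngle_le_pi (x : X) (γ σ : ℝ → X) : alexAngle x γ σ ≤ π :=
  limsup_le_of_le (isCoboundedUnder_le_of_le _ fun _ => arccos_nonneg _)
    (Eventually.of_forall fun _ => arccos_le_pi _)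

theorem tendsto_compAngle_of_tendsto_dist {ι : Type*} {l : Filter ι}
    {x y z : ι → X} {c D : ℝ} (hc : 0 < c) (hD : 0 ≤ D)
    (hxy : Tendsto (fun i => dist (x i) (y i)) l (𝓝 c))
    (hxz : Tendsto (fun i => dist (x i) (z i)) l (𝓝 (c + D)))
    (hyz : ∀ i, dist (y i) (z i) ≤ D) :
    Tendsto (fun i => compAngle (x i) (y i) (z i)) l (𝓝 0) := by
  have hlower : ∀ i, (dist (x i) (y i) ^ 2 + dist (x i) (z i) ^ 2 - D ^ 2) /
      (2 * dist (x i) (y i) * dist (x i) (z i)) ≤ compCos (x i) (y i) (z i) := fun i =>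
    div_le_div_of_nonneg_right
      (by linarith [pow_le_pow_left₀ dist_nonneg (hyz i) 2]) (by positivity)
  have hlower_lim := (((hxy.pow 2).add (hxz.pow 2)).sub_const (D ^ 2)).div
    ((hxy.const_mul 2).mul hxz) (by positivity)
  rw [show (c ^ 2 + (c + D) ^ 2 - D ^ 2) / (2 * c * (c + D)) = 1 by field_simp; ring]
    at hlower_lim
  have hcos := tendsto_of_tendsto_of_tendsto_of_le_of_le hlower_lim tendsto_const_nhds hlower
    fun i => compCos_le_one _ _ _
  simpa only [compAngle_eq_arccos, arccos_one, Function.comp_def] using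
    (continuous_arccos.tendsto 1).comp hcos

namespace CAT0Space

theorem pi_sub_compAngle_le_compAngle (hX : CAT0Space X) {p x z w : X} {τ σ : ℝ → X}
    (hτ : IsGeodesicOn τ 0 (dist p z)) (hτ0 : τ 0 = p) (hτ1 : τ (dist p z) = z)
    {t : ℝ} (ht : t ∈ Ioo 0 (dist p z)) (hx : τ t = x)
    (hσ : IsGeodesicOn σ 0 (dist x w)) (hσ0 : σ 0 = x) (hσ1 : σ (dist x w) = w)
    {s : ℝ} (hs : s ∈ Ioc 0 (dist x w)) :
    π - compAngle x z w ≤ compAngle x p (σ s) := by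
  have htI : t ∈ Icc 0 (dist p z) := Ioo_subset_Icc_self ht
  have hsI : s ∈ Icc 0 (dist x w) := Ioc_subset_Icc_self hs
  have hpx : dist x p = t := by rw [dist_comm, ← hτ0, ← hx, hτ.dist_left_apply htI]
  have hxz : dist x z = dist p z - t := by
    rw [← hx]; simpa only [hτ1] using hτ.dist_apply_right htI
  have hxq : dist x (σ s) = s := hσ0 ▸ hσ.dist_left_apply hsI
  have hw := hX.mul_dist_sq_le hσ hσ0 hσ1 hsI (z := z)
  have hz := hX.mul_dist_sq_le hτ hτ0 hτ1 htI (z := σ s)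
  rw [hx, hxq, dist_comm z] at hz
  rw [hxz, dist_comm w] at hw
  have hxz_pos : 0 < dist p z - t := sub_pos.mpr ht.2
  have hxw_pos : 0 < dist x w := hs.1.trans_le hs.2
  -- `t • hw + dist x w • hz` is the inequality `cos ∠̄ₓ(p, σ s) ≤ -cos ∠̄ₓ(z, w)`
  rw [compAngle_eq_arccos, compAngle_eq_arccos, ← arccos_neg]
  refine antitone_arccos ?_
  rw [compCos, compCos, hpx, hxq, hxz, ← neg_div,
    div_le_div_iff₀ (mul_pos (mul_pos two_pos ht.1) hs.1) (by positivity)]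
  nlinarith [mul_le_mul_of_nonneg_left hw ht.1.le, mul_le_mul_of_nonneg_left hz hxw_pos.le]

theorem pi_sub_compAngle_le_alexAngle (hX : CAT0Space X) {x y z w : X} {τ γ σ : ℝ → X}
    (hτ : IsGeodesicOn τ 0 (dist y z)) (hτ0 : τ 0 = y) (hτ1 : τ (dist y z) = z)
    {a : ℝ} (ha : a ∈ Ioo 0 (dist y z)) (hx : τ a = x)
    (hγ : IsGeodesicOn γ 0 (dist x y)) (hγ0 : γ 0 = x) (hγ1 : γ (dist x y) = y)
    (hσ : IsGeodesicOn σ 0 (dist x w)) (hσ0 : σ 0 = x) (hσ1 : σ (dist x w) = w)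
    (hxw : x ≠ w) :
    π - compAngle x z w ≤ alexAngle x γ σ := by
  have hxy : dist x y = a := by
    rw [dist_comm, ← hτ0, ← hx, hτ.dist_left_apply (Ioo_subset_Icc_self ha)]
  -- `γ` runs back along `τ`, so `γ t` lies on the geodesic `[τ (a - t), z]`, with `x` inside it
  have hτ_rev : IsGeodesicOn (fun r => τ (a - r)) 0 (dist x y) := by
    rw [hxy]; exact (hτ.comp_const_sub a).mono (by linarith [ha.2]) (by simp)
  have hγ_eq : ∀ t ∈ Icc 0 a, γ t = τ (a - t) := fun t ht =>
    hX.geodesicOn_eq hγ hγ0 hγ1 hτ_rev (by simpa using hx) (by simp [hxy, hτ0]) (hxy ▸ ht)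
  have hcomp : ∀ t ∈ Ioc 0 a, ∀ s ∈ Ioc 0 (dist x w),
      π - compAngle x z w ≤ compAngle x (γ t) (σ s) := by
    intro t ht s hs
    rw [hγ_eq t (Ioc_subset_Icc_self ht)]
    have hpz : dist (τ (a - t)) z = dist y z - a + t := by
      have h := hτ.dist_apply_right (t := a - t) ⟨by linarith [ht.2], by linarith [ht.1, ha.2]⟩
      rw [hτ1] at h
      rw [h]; ring
    refine hX.pi_sub_compAngle_le_compAngle (τ := fun r => τ (a - t + r)) ?_ (by simp) ?_
      ⟨ht.1, by linarith [ha.2]⟩ (by simpa using hx) hσ hσ0 hσ1 hs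
    · rw [hpz]
      exact (hτ.comp_const_add (a - t)).mono (by linarith [ht.2]) (by linarith)
    · rw [hpz, show a - t + (dist y z - a + t) = dist y z by ring, hτ1]
  refine le_limsup_of_frequently_le (Eventually.frequently ?_) ?_
  · filter_upwards [prod_mem_prod (Ioc_mem_nhdsGT ha.1) (Ioc_mem_nhdsGT (dist_pos.mpr hxw))]
      with p hp using hcomp p.1 hp.1 p.2 hp.2
  · exact isBoundedUnder_of ⟨π, fun _ => arccos_le_pi _⟩

end CAT0Space

end Angles

namespace IsLionManPlay

variable {X : Type*} [MetricSpace X] {A : Set X} {D : ℝ} {L M : ℕ → X}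

theorem exists_geodesicOn_through_succ (h : IsLionManPlay A D L M) (n : ℕ) :
    ∃ τ : ℝ → X, IsGeodesicOn τ 0 (dist (L n) (M n)) ∧ τ 0 = L n ∧
      τ (dist (L n) (M n)) = M n ∧ τ (dist (L n) (L (n + 1))) = L (n + 1) := by
  obtain ⟨S, hS, hL⟩ := h.2.2.1 n
  exact hS.exists_geodesicOn_of_mem hL

theorem dist_succ_eq (h : IsLionManPlay A D L M) (n : ℕ) :
    dist (L (n + 1)) (M n) = dist (L n) (M n) - min D (dist (L n) (M n)) := by
  obtain ⟨τ, hτ, -, hτ1, hτL⟩ := h.exists_geodesicOn_through_succ n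
  have hstep := h.2.2.2.1 n
  have hdist := hτ.dist_apply_right ⟨dist_nonneg, hstep.trans_le (min_le_right _ _)⟩
  rwa [hτL, hτ1, hstep] at hdist

theorem antitone_dist (h : IsLionManPlay A D L M) : Antitone fun n => dist (L (n + 1)) (M n) := by
  refine antitone_nat_of_succ_le fun n => ?_
  have htri : dist (L (n + 1)) (M (n + 1)) ≤ dist (L (n + 1)) (M n) + D :=
    (dist_triangle _ (M n) _).trans (add_le_add le_rfl (h.2.2.2.2 n))
  rw [h.dist_succ_eq (n + 1)]
  rcases le_total D (dist (L (n + 1)) (M (n + 1))) with hD | hD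
  · rw [min_eq_left hD]; linarith
  · rw [min_eq_right hD, sub_self]; exact dist_nonneg

theorem lt_dist (h : IsLionManPlay A D L M) (hman : ¬ LionWins L M) (n : ℕ) :
    D < dist (L n) (M n) := by
  by_contra! hle
  have hcaught : dist (L (n + 1)) (M n) = 0 := by
    rw [h.dist_succ_eq n, min_eq_right hle, sub_self]
  refine hman (tendsto_const_nhds.congr' (eventually_atTop.2 ⟨n, fun k hk => ?_⟩))
  exact (le_antisymm ((h.antitone_dist hk).trans_eq hcaught) dist_nonneg).symm

theorem dist_succ_eq_sub (h : IsLionManPlay A D L M) (hman : ¬ LionWins L M) (n : ℕ) :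
    dist (L (n + 1)) (M n) = dist (L n) (M n) - D := by
  rw [h.dist_succ_eq n, min_eq_left (h.lt_dist hman n).le]

theorem exists_tendsto_dist (h : IsLionManPlay A D L M) (hman : ¬ LionWins L M) :
    ∃ c > 0, Tendsto (fun n => dist (L (n + 1)) (M n)) atTop (𝓝 c) := by
  have hlim := tendsto_atTop_ciInf h.antitone_dist ⟨0, by rintro _ ⟨n, rfl⟩; exact dist_nonneg⟩
  refine ⟨_, (le_ciInf fun n => dist_nonneg).lt_of_ne fun hc => hman ?_, hlim⟩
  rwa [← hc] at hlim

theorem tendsto_compAngle (h : IsLionManPlay A D L M) (hD : 0 < D) (hman : ¬ LionWins L M) :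
    Tendsto (fun n => compAngle (L (n + 1)) (M n) (M (n + 1))) atTop (𝓝 0) := by
  obtain ⟨c, hc, hlim⟩ := h.exists_tendsto_dist hman
  refine tendsto_compAngle_of_tendsto_dist hc hD.le hlim ?_ h.2.2.2.2
  have hsucc := (hlim.comp (tendsto_add_atTop_nat 1)).add_const D
  refine hsucc.congr fun n => ?_
  simp only [Function.comp_apply, h.dist_succ_eq_sub hman (n + 1), sub_add_cancel]

end IsLionManPlay

theorem stmt12_general {X : Type*} [MetricSpace X] (hX : CAT0Space X)
    (A : Set X)
    (D : ℝ) (hD : 0 < D) (L M : ℕ → X) (hplay : IsLionManPlay A D L M)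
    (hman : ¬ LionWins L M) :
    Filter.Tendsto (fun n => compAngle (L (n + 1)) (M n) (M (n + 1)))
      Filter.atTop (nhds 0) ∧
    ∀ γ σ : ℕ → ℝ → X,
      (∀ n, IsGeodesicOn (γ n) 0 (dist (L (n + 1)) (L n)) ∧ γ n 0 = L (n + 1) ∧
        γ n (dist (L (n + 1)) (L n)) = L n) →
      (∀ n, IsGeodesicOn (σ n) 0 (dist (L (n + 1)) (M (n + 1))) ∧ σ n 0 = L (n + 1) ∧
        σ n (dist (L (n + 1)) (M (n + 1))) = M (n + 1)) →
      Filter.Tendsto (fun n => alexAngle (L (n + 1)) (γ n) (σ n))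
        Filter.atTop (nhds Real.pi) := by
  have hcomp := hplay.tendsto_compAngle hD hman
  refine ⟨hcomp, fun γ σ hγ hσ => ?_⟩
  have hlower : ∀ n, π - compAngle (L (n + 1)) (M n) (M (n + 1)) ≤
      alexAngle (L (n + 1)) (γ n) (σ n) := by
    intro n
    obtain ⟨τ, hτ, hτ0, hτ1, hτL⟩ := hplay.exists_geodesicOn_through_succ n
    have hstep : dist (L n) (L (n + 1)) = D := by
      rw [hplay.2.2.2.1 n, min_eq_left (hplay.lt_dist hman n).le]
    obtain ⟨hγn, hγ0, hγ1⟩ := hγ n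
    obtain ⟨hσn, hσ0, hσ1⟩ := hσ n
    refine hX.pi_sub_compAngle_le_alexAngle hτ hτ0 hτ1 ?_ hτL hγn hγ0 hγ1 hσn hσ0 hσ1
      (dist_pos.mp (hD.trans (hplay.lt_dist hman (n + 1))))
    rw [hstep]
    exact ⟨hD, hplay.lt_dist hman n⟩
  have hπ : Tendsto (fun n => π - compAngle (L (n + 1)) (M n) (M (n + 1))) atTop (𝓝 π) := by
    simpa using tendsto_const_nhds.sub hcomp
  exact tendsto_of_tendsto_of_tendsto_of_le_of_le hπ tendsto_const_nhds hlower
    fun n => alexAngle_le_pi _ _ _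

/-- In a play of the Lion-Man game in a convex subset of a CAT(0) space in which the man
wins, the comparison angles `∠̄_{L_n}(M_{n-1}, M_n)` tend to `0` and the Alexandrov angles
`β_n = ∠_{L_n}(L_{n-1}, M_n)` tend to `π` (here stated with the index shifted by one:
the angles are taken at `L_{n+1}`, between `L_n` and `M_{n+1}`, along any unit-speed
geodesics issuing from `L_{n+1}`). -/
theorem stmt12 {X : Type*} [MetricSpace X] (hX : CAT0Space X)
    (A : Set X) (hA : A.Nonempty) (hconv : GeodesicConvex A)
    (D : ℝ) (hD : 0 < D) (L M : ℕ → X) (hplay : IsLionManPlay A D L M)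
    (hman : ¬ LionWins L M) :
    Filter.Tendsto (fun n => compAngle (L (n + 1)) (M n) (M (n + 1)))
      Filter.atTop (nhds 0) ∧
    ∀ γ σ : ℕ → ℝ → X,
      (∀ n, IsGeodesicOn (γ n) 0 (dist (L (n + 1)) (L n)) ∧ γ n 0 = L (n + 1) ∧
        γ n (dist (L (n + 1)) (L n)) = L n) →
      (∀ n, IsGeodesicOn (σ n) 0 (dist (L (n + 1)) (M (n + 1))) ∧ σ n 0 = L (n + 1) ∧
        σ n (dist (L (n + 1)) (M (n + 1))) = M (n + 1)) →
      Filter.Tendsto (fun n => alexAngle (L (n + 1)) (γ n) (σ n))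
        Filter.atTop (nhds Real.pi) :=
  stmt12_general hX A D hD L M hplay hman
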